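/- arXiv:2201.01563 — 2 statements merged into one kernel-verified Lean document; each statement's English description precedes it below -/
import Mathlib

section
/- If a function w : [0,T] → ℝ is absolutely continuous with w(0) = 0, w(T) = 0, and its Caputo fractional derivative ∂_t^α w(t) ≥ 0 for almost every t ∈ (0,T), then ∂_t^α w(t) = 0 almost everywhere and w ≡ 0 on [0,T]. -/
open MeasureTheory intervalIntegral

/-- The Caputo fractional derivative of order `α ∈ (0,1]` of a function `w`. -/
noncomputable def caputoDeriv (α : ℝ) (w : ℝ → ℝ) (t : ℝ) : ℝ :=
  if α = 1 then deriv w t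
  else (Real.Gamma (1 - α))⁻¹ * ∫ s in (0:ℝ)..t, (t - s) ^ (-α) * deriv w s

lemma kernelBound {α u T : ℝ} (hα0 : 0 < α) (hα1 : α < 1) (hu : 0 < u) (huT : u < T) :
    ∫⁻ s in Set.Ico u T,
        ENNReal.ofReal ((T - s) ^ (α - 1)) * ENNReal.ofReal ((s - u) ^ (-α)) ≤
      ENNReal.ofReal (1 / (1 - α) + 1 / α) := by
  set m : ℝ := (u + T) / 2 with hm
  set d : ℝ := (T - u) / 2 with hd
  have hd0 : 0 < d := by simp only [hd]; linarith
  have hum : u < m := by simp only [hm]; linarith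
  have hmT : m < T := by simp only [hm]; linarith
  have hTm : T - m = d := by simp only [hm, hd]; ring
  have hmu : m - u = d := by simp only [hm, hd]; ring
  have h1 : ∫⁻ s in Set.Ioc u m,
      ENNReal.ofReal ((T - s) ^ (α - 1)) * ENNReal.ofReal ((s - u) ^ (-α)) ≤
      ENNReal.ofReal (1 / (1 - α)) := by
    have hb : ∀ s ∈ Set.Ioc u m,
        ENNReal.ofReal ((T - s) ^ (α - 1)) * ENNReal.ofReal ((s - u) ^ (-α)) ≤
        ENNReal.ofReal (d ^ (α - 1)) * ENNReal.ofReal ((s - u) ^ (-α)) := by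
      intro s hs
      exact mul_le_mul_left (ENNReal.ofReal_le_ofReal
        (Real.rpow_le_rpow_of_nonpos hd0 (by rw [← hTm]; linarith [hs.2]) (by linarith))) _
    calc ∫⁻ s in Set.Ioc u m,
          ENNReal.ofReal ((T - s) ^ (α - 1)) * ENNReal.ofReal ((s - u) ^ (-α))
        ≤ ∫⁻ s in Set.Ioc u m,
          ENNReal.ofReal (d ^ (α - 1)) * ENNReal.ofReal ((s - u) ^ (-α)) :=
          setLIntegral_mono' measurableSet_Ioc hb
      _ = ENNReal.ofReal (d ^ (α - 1)) * ∫⁻ s in Set.Ioc u m,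
            ENNReal.ofReal ((s - u) ^ (-α)) :=
          lintegral_const_mul' _ _ ENNReal.ofReal_ne_top
      _ ≤ ENNReal.ofReal (d ^ (α - 1)) * ENNReal.ofReal (d ^ (1 - α) / (1 - α)) := by
          gcongr
          have hint : IntegrableOn (fun s : ℝ => (s - u) ^ (-α)) (Set.Ioc u m) := by
            have := (intervalIntegrable_rpow' (a := 0) (b := m - u)
              (r := -α) (by linarith)).comp_sub_right u
            simp only [zero_add, sub_add_cancel] at this
            exact (intervalIntegrable_iff_integrableOn_Ioc_of_le hum.le).mp this
          have hnn : 0 ≤ᵐ[volume.restrict (Set.Ioc u m)] fun s : ℝ => (s - u) ^ (-α) :=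
            ae_restrict_of_forall_mem measurableSet_Ioc
              (fun s hs => Real.rpow_nonneg (by linarith [hs.1]) _)
          rw [← ofReal_integral_eq_lintegral_ofReal hint hnn]
          apply ENNReal.ofReal_le_ofReal
          have : ∫ s in Set.Ioc u m, (s - u) ^ (-α) = ∫ s in u..m, (s - u) ^ (-α) :=
            (integral_of_le hum.le).symm
          rw [this]
          have h2 : (∫ s in u..m, (s - u) ^ (-α)) = ∫ x in (u - u)..(m - u), x ^ (-α) :=
            integral_comp_sub_right (fun x : ℝ => x ^ (-α)) u
          rw [h2, sub_self, integral_rpow (Or.inl (by linarith)), hmu,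
            Real.zero_rpow (by intro h; linarith : -α + 1 ≠ 0)]
          rw [show -α + 1 = 1 - α by ring, sub_zero]
      _ = ENNReal.ofReal (1 / (1 - α)) := by
          rw [← ENNReal.ofReal_mul (Real.rpow_nonneg hd0.le _)]
          congr 1
          rw [div_eq_mul_one_div, ← mul_assoc, ← Real.rpow_add hd0]
          norm_num
  have h2 : ∫⁻ s in Set.Ioc m T,
      ENNReal.ofReal ((T - s) ^ (α - 1)) * ENNReal.ofReal ((s - u) ^ (-α)) ≤
      ENNReal.ofReal (1 / α) := by
    have hb : ∀ s ∈ Set.Ioc m T,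
        ENNReal.ofReal ((T - s) ^ (α - 1)) * ENNReal.ofReal ((s - u) ^ (-α)) ≤
        ENNReal.ofReal ((T - s) ^ (α - 1)) * ENNReal.ofReal (d ^ (-α)) := by
      intro s hs
      exact mul_le_mul_right (ENNReal.ofReal_le_ofReal
        (Real.rpow_le_rpow_of_nonpos hd0 (by rw [← hmu]; linarith [hs.1]) (by linarith))) _
    calc ∫⁻ s in Set.Ioc m T,
          ENNReal.ofReal ((T - s) ^ (α - 1)) * ENNReal.ofReal ((s - u) ^ (-α))
        ≤ ∫⁻ s in Set.Ioc m T,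
          ENNReal.ofReal ((T - s) ^ (α - 1)) * ENNReal.ofReal (d ^ (-α)) :=
          setLIntegral_mono' measurableSet_Ioc hb
      _ = (∫⁻ s in Set.Ioc m T, ENNReal.ofReal ((T - s) ^ (α - 1))) *
            ENNReal.ofReal (d ^ (-α)) :=
          lintegral_mul_const' _ _ ENNReal.ofReal_ne_top
      _ ≤ ENNReal.ofReal (d ^ α / α) * ENNReal.ofReal (d ^ (-α)) := by
          gcongr
          have hint : IntegrableOn (fun s : ℝ => (T - s) ^ (α - 1)) (Set.Ioc m T) := by
            have := ((intervalIntegrable_rpow' (a := 0) (b := T - m)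
              (r := α - 1) (by linarith)).comp_sub_left T).symm
            simp only [sub_zero, sub_sub_cancel] at this
            exact (intervalIntegrable_iff_integrableOn_Ioc_of_le hmT.le).mp this
          have hnn : 0 ≤ᵐ[volume.restrict (Set.Ioc m T)] fun s : ℝ => (T - s) ^ (α - 1) :=
            ae_restrict_of_forall_mem measurableSet_Ioc
              (fun s hs => Real.rpow_nonneg (by linarith [hs.2]) _)
          rw [← ofReal_integral_eq_lintegral_ofReal hint hnn]
          apply ENNReal.ofReal_le_ofReal
          rw [← integral_of_le hmT.le]
          have h2 : (∫ s in m..T, (T - s) ^ (α - 1)) = ∫ x in (T - T)..(T - m), x ^ (α - 1) :=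
            integral_comp_sub_left (fun x : ℝ => x ^ (α - 1)) T
          rw [h2, sub_self, integral_rpow (Or.inl (by linarith)), hTm,
            Real.zero_rpow (by intro h; linarith : α - 1 + 1 ≠ 0)]
          rw [show α - 1 + 1 = α by ring, sub_zero]
      _ = ENNReal.ofReal (1 / α) := by
          rw [← ENNReal.ofReal_mul (by positivity)]
          congr 1
          rw [div_eq_mul_one_div, mul_comm, ← mul_assoc, ← Real.rpow_add hd0]
          norm_num
  calc ∫⁻ s in Set.Ico u T,
        ENNReal.ofReal ((T - s) ^ (α - 1)) * ENNReal.ofReal ((s - u) ^ (-α))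
      = ∫⁻ s in Set.Ioo u T,
        ENNReal.ofReal ((T - s) ^ (α - 1)) * ENNReal.ofReal ((s - u) ^ (-α)) := by
        rw [Measure.restrict_congr_set Ioo_ae_eq_Ico]
    _ ≤ ∫⁻ s in Set.Ioc u m ∪ Set.Ioc m T,
        ENNReal.ofReal ((T - s) ^ (α - 1)) * ENNReal.ofReal ((s - u) ^ (-α)) := by
        apply lintegral_mono_set
        intro s hs
        rcases le_or_gt s m with h | h
        · exact Or.inl ⟨hs.1, h⟩
        · exact Or.inr ⟨h, hs.2.le⟩
    _ ≤ _ + _ := lintegral_union_le _ _ _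
    _ ≤ ENNReal.ofReal (1 / (1 - α)) + ENNReal.ofReal (1 / α) := add_le_add h1 h2
    _ = ENNReal.ofReal (1 / (1 - α) + 1 / α) := by
        rw [ENNReal.ofReal_add (div_nonneg zero_le_one (by linarith)) (by positivity)]

lemma caputoFinite {α T : ℝ} (hα0 : 0 < α) (hα1 : α < 1) (hT : 0 < T) (g : ℝ → ℝ)
    (hgm : Measurable g) (hg : IntegrableOn g (Set.Ioc 0 T)) :
    (∫⁻ s in Set.Ioo 0 T, ENNReal.ofReal ((T - s) ^ (α - 1)) *
      ∫⁻ u in Set.Ioc 0 s, ENNReal.ofReal ((s - u) ^ (-α) * |g u|)) < ⊤ := by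
  set C : ℝ := 1 / (1 - α) + 1 / α with hC
  set F : ℝ × ℝ → ENNReal := fun p =>
    Set.indicator {p : ℝ × ℝ | 0 < p.2 ∧ p.2 ≤ p.1}
      (fun p => ENNReal.ofReal ((T - p.1) ^ (α - 1)) *
        ENNReal.ofReal ((p.1 - p.2) ^ (-α)) * ENNReal.ofReal |g p.2|) p with hF
  have hset : MeasurableSet {p : ℝ × ℝ | 0 < p.2 ∧ p.2 ≤ p.1} :=
    (measurableSet_lt measurable_const measurable_snd).inter
      (measurableSet_le measurable_snd measurable_fst)
  have hFm : Measurable F := by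
    apply Measurable.indicator _ hset
    fun_prop
  -- inner rewrite
  have hinner : ∀ s ∈ Set.Ioo (0:ℝ) T,
      ENNReal.ofReal ((T - s) ^ (α - 1)) *
        (∫⁻ u in Set.Ioc 0 s, ENNReal.ofReal ((s - u) ^ (-α) * |g u|)) =
      ∫⁻ u, F (s, u) := by
    intro s _
    have hind : (fun u => F (s, u)) = Set.indicator (Set.Ioc 0 s)
        (fun u => ENNReal.ofReal ((T - s) ^ (α - 1)) *
          ENNReal.ofReal ((s - u) ^ (-α)) * ENNReal.ofReal |g u|) := by
      funext u
      by_cases h : u ∈ Set.Ioc 0 s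
      · rw [Set.indicator_of_mem h]
        exact Set.indicator_of_mem (by exact ⟨h.1, h.2⟩) _
      · rw [Set.indicator_of_notMem h]
        exact Set.indicator_of_notMem (by simpa [Set.mem_Ioc] using h) _
    rw [hind, lintegral_indicator measurableSet_Ioc]
    rw [← lintegral_const_mul' _ _ ENNReal.ofReal_ne_top]
    apply setLIntegral_congr_fun measurableSet_Ioc
    intro u hu
    beta_reduce
    rw [ENNReal.ofReal_mul (Real.rpow_nonneg (by linarith [hu.2]) _), mul_assoc]
  rw [setLIntegral_congr_fun measurableSet_Ioo hinner]
  have hswap : (∫⁻ s in Set.Ioo 0 T, ∫⁻ u, F (s, u)) =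
      ∫⁻ u, ∫⁻ s in Set.Ioo 0 T, F (s, u) := by
    apply lintegral_lintegral_swap
    exact (hFm.comp measurable_id).aemeasurable
  rw [hswap]
  have hbound : ∀ u : ℝ, (∫⁻ s in Set.Ioo 0 T, F (s, u)) ≤
      Set.indicator (Set.Ioo 0 T) (fun u => ENNReal.ofReal |g u| * ENNReal.ofReal C) u := by
    intro u
    by_cases hu : u ∈ Set.Ioo (0:ℝ) T
    · rw [Set.indicator_of_mem hu]
      have hind2 : (fun s => F (s, u)) = Set.indicator (Set.Ici u)
          (fun s => ENNReal.ofReal ((T - s) ^ (α - 1)) *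
            ENNReal.ofReal ((s - u) ^ (-α)) * ENNReal.ofReal |g u|) := by
        funext s
        by_cases h : u ≤ s
        · rw [Set.indicator_of_mem (show s ∈ Set.Ici u from h)]
          exact Set.indicator_of_mem (show (s,u) ∈ {p : ℝ × ℝ | 0 < p.2 ∧ p.2 ≤ p.1} from ⟨hu.1, h⟩) _
        · rw [Set.indicator_of_notMem (show s ∉ Set.Ici u from h)]
          exact Set.indicator_of_notMem (fun hmem => h hmem.2) _
      rw [hind2, lintegral_indicator measurableSet_Ici,
        Measure.restrict_restrict measurableSet_Ici]
      have hsetEq : Set.Ici u ∩ Set.Ioo 0 T = Set.Ico u T := by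
        ext x
        simp only [Set.mem_inter_iff, Set.mem_Ici, Set.mem_Ioo, Set.mem_Ico]
        constructor
        · rintro ⟨h1, _, h3⟩; exact ⟨h1, h3⟩
        · rintro ⟨h1, h2⟩; exact ⟨h1, lt_of_lt_of_le hu.1 h1, h2⟩
      rw [hsetEq, lintegral_mul_const' _ _ ENNReal.ofReal_ne_top]
      rw [mul_comm (ENNReal.ofReal |g u|) _]
      exact mul_le_mul_left (kernelBound hα0 hα1 hu.1 hu.2) _
    · rw [Set.indicator_of_notMem hu]
      have : ∀ s ∈ Set.Ioo (0:ℝ) T, F (s, u) = 0 := by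
        intro s hs
        apply Set.indicator_of_notMem
        rintro ⟨h1, h2⟩
        simp only [Set.mem_Ioo, not_and, not_lt] at hu
        exact absurd (lt_of_le_of_lt h2 hs.2) (not_lt.mpr (hu h1))
      rw [setLIntegral_congr_fun measurableSet_Ioo this, lintegral_zero]
  calc (∫⁻ u, ∫⁻ s in Set.Ioo 0 T, F (s, u))
      ≤ ∫⁻ u, Set.indicator (Set.Ioo 0 T)
          (fun u => ENNReal.ofReal |g u| * ENNReal.ofReal C) u := lintegral_mono hbound
    _ = ∫⁻ u in Set.Ioo 0 T, ENNReal.ofReal |g u| * ENNReal.ofReal C :=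
        lintegral_indicator measurableSet_Ioo _
    _ = (∫⁻ u in Set.Ioo 0 T, ENNReal.ofReal |g u|) * ENNReal.ofReal C :=
        lintegral_mul_const' _ _ ENNReal.ofReal_ne_top
    _ < ⊤ := by
        apply ENNReal.mul_lt_top _ ENNReal.ofReal_lt_top
        have h1 : (∫⁻ u in Set.Ioo 0 T, ENNReal.ofReal |g u|) ≤
            ∫⁻ u in Set.Ioc 0 T, ENNReal.ofReal |g u| :=
          lintegral_mono_set Set.Ioo_subset_Ioc_self
        apply lt_of_le_of_lt h1
        have := hg.2
        rw [HasFiniteIntegral] at this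
        refine lt_of_eq_of_lt ?_ this
        congr 1
        funext u
        rw [← Real.enorm_eq_ofReal_abs]

/-- If `w` is absolutely continuous on `[0,T]` with `w(0) = 0`, `w(T) = 0`, and its Caputo
derivative `∂_t^α w ≥ 0` a.e. on `(0,T)`, then `∂_t^α w = 0` a.e. and `w ≡ 0` on `[0,T]`. -/
theorem caputo_nonneg_zero_endpoints_implies_zero
    (α T : ℝ) (hα0 : 0 < α) (hα1 : α ≤ 1) (hT : 0 < T) (w : ℝ → ℝ)
    -- absolute continuity of `w` on `[0,T]` (fundamental theorem of calculus form)
    (hac : ∀ t ∈ Set.Icc 0 T, w t = w 0 + ∫ s in (0:ℝ)..t, deriv w s)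
    (hderiv_int : IntervalIntegrable (deriv w) volume 0 T)
    -- the representation identity `w(t) = w(0) + ∫_0^t ((t-s)^{α-1}/Γ(α)) ∂_s^α w(s) ds`
    (hrep : ∀ t ∈ Set.Icc 0 T,
      w t = w 0 + ∫ s in (0:ℝ)..t, ((t - s) ^ (α - 1) / Real.Gamma α) * caputoDeriv α w s)
    (hw0 : w 0 = 0) (hwT : w T = 0)
    (hpos : ∀ᵐ t ∂(volume.restrict (Set.Ioo 0 T)), 0 ≤ caputoDeriv α w t) :
    (∀ᵐ t ∂(volume.restrict (Set.Ioo 0 T)), caputoDeriv α w t = 0) ∧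
    (∀ t ∈ Set.Icc 0 T, w t = 0) := by
  have hΓα : 0 < Real.Gamma α := Real.Gamma_pos_of_pos hα0
  set c : ℝ → ℝ := caputoDeriv α w with hc
  set g : ℝ → ℝ := deriv w with hg
  have hgm : Measurable g := measurable_deriv w
  have hgint : IntegrableOn g (Set.Ioc 0 T) :=
    (intervalIntegrable_iff_integrableOn_Ioc_of_le hT.le).mp hderiv_int
  -- Integrability of the kernel times Caputo derivative on (0, T]
  have hint : IntegrableOn (fun s => ((T - s) ^ (α - 1) / Real.Gamma α) * c s)
      (Set.Ioc 0 T) := by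
    rcases eq_or_lt_of_le hα1 with h1 | h1
    · -- α = 1
      have : (fun s => ((T - s) ^ (α - 1) / Real.Gamma α) * c s) = g := by
        funext s
        rw [hc]
        simp [caputoDeriv, h1, Real.Gamma_one, hg]
      rw [this]
      exact hgint
    · -- α < 1
      have hΓ1α : 0 < Real.Gamma (1 - α) := Real.Gamma_pos_of_pos (by linarith)
      have hαne : α ≠ 1 := ne_of_lt h1
      -- a.e. strong measurability
      have hmeas : AEStronglyMeasurable
          (fun s => ((T - s) ^ (α - 1) / Real.Gamma α) * c s)
          (volume.restrict (Set.Ioc 0 T)) := by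
        have hFm : Measurable fun p : ℝ × ℝ =>
            Set.indicator {p : ℝ × ℝ | 0 < p.2 ∧ p.2 ≤ p.1}
              (fun p => (p.1 - p.2) ^ (-α) * g p.2) p := by
          apply Measurable.indicator _
            ((measurableSet_lt measurable_const measurable_snd).inter
              (measurableSet_le measurable_snd measurable_fst))
          fun_prop
        have hBm : StronglyMeasurable fun s : ℝ =>
            ∫ u, Set.indicator {p : ℝ × ℝ | 0 < p.2 ∧ p.2 ≤ p.1}
              (fun p => (p.1 - p.2) ^ (-α) * g p.2) (s, u) :=
          hFm.stronglyMeasurable.integral_prod_right'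
        have hBm2 : Measurable fun s : ℝ =>
            ((T - s) ^ (α - 1) / Real.Gamma α) * ((Real.Gamma (1 - α))⁻¹ *
              ∫ u, Set.indicator {p : ℝ × ℝ | 0 < p.2 ∧ p.2 ≤ p.1}
                (fun p => (p.1 - p.2) ^ (-α) * g p.2) (s, u)) := by
          apply Measurable.mul
          · fun_prop
          · exact (hBm.measurable.const_mul _)
        apply (hBm2.aestronglyMeasurable (μ := volume.restrict (Set.Ioc 0 T))).congr
        apply ae_restrict_of_forall_mem measurableSet_Ioc
        intro s hs
        congr 1
        rw [hc]
        simp only [caputoDeriv, if_neg hαne]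
        congr 1
        have h1 : (fun u => Set.indicator {p : ℝ × ℝ | 0 < p.2 ∧ p.2 ≤ p.1}
            (fun p => (p.1 - p.2) ^ (-α) * g p.2) (s, u)) =
            Set.indicator (Set.Ioc 0 s) (fun u => (s - u) ^ (-α) * g u) := by
          funext u
          by_cases h : u ∈ Set.Ioc 0 s
          · rw [Set.indicator_of_mem h]
            exact Set.indicator_of_mem
              (show (s, u) ∈ {p : ℝ × ℝ | 0 < p.2 ∧ p.2 ≤ p.1} from ⟨h.1, h.2⟩) _
          · rw [Set.indicator_of_notMem h]
            exact Set.indicator_of_notMem (by simpa [Set.mem_Ioc] using h) _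
        rw [h1, MeasureTheory.integral_indicator measurableSet_Ioc, ← integral_of_le hs.1.le]
      refine ⟨hmeas, ?_⟩
      -- finiteness of the integral
      rw [HasFiniteIntegral]
      have key := caputoFinite hα0 h1 hT g hgm hgint
      have hresteq : volume.restrict (Set.Ioc (0:ℝ) T) = volume.restrict (Set.Ioo 0 T) :=
        (Measure.restrict_congr_set Ioo_ae_eq_Ioc).symm
      rw [hresteq]
      have hb : ∀ s ∈ Set.Ioo (0:ℝ) T,
          (‖((T - s) ^ (α - 1) / Real.Gamma α) * c s‖₊ : ENNReal) ≤
          ENNReal.ofReal ((Real.Gamma α)⁻¹ * (Real.Gamma (1 - α))⁻¹) *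
            (ENNReal.ofReal ((T - s) ^ (α - 1)) *
              ∫⁻ u in Set.Ioc 0 s, ENNReal.ofReal ((s - u) ^ (-α) * |g u|)) := by
        intro s hs
        have hcs : c s = (Real.Gamma (1 - α))⁻¹ * ∫ u in (0:ℝ)..s, (s - u) ^ (-α) * g u := by
          rw [hc]; simp only [caputoDeriv, if_neg hαne]; rfl
        have habs : (‖c s‖₊ : ENNReal) ≤ ENNReal.ofReal (Real.Gamma (1 - α))⁻¹ *
            ∫⁻ u in Set.Ioc 0 s, ENNReal.ofReal ((s - u) ^ (-α) * |g u|) := by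
          rw [hcs]
          have : (‖(Real.Gamma (1 - α))⁻¹ * ∫ u in (0:ℝ)..s, (s - u) ^ (-α) * g u‖₊ : ENNReal)
              = ENNReal.ofReal (Real.Gamma (1 - α))⁻¹ *
                (‖∫ u in (0:ℝ)..s, (s - u) ^ (-α) * g u‖₊ : ENNReal) := by
            rw [nnnorm_mul, ENNReal.coe_mul]
            congr 1
            rw [← enorm_eq_nnnorm, Real.enorm_eq_ofReal_abs, abs_of_nonneg (by positivity)]
          rw [this]
          apply mul_le_mul_right
          rw [integral_of_le hs.1.le]
          calc (‖∫ u in Set.Ioc 0 s, (s - u) ^ (-α) * g u‖₊ : ENNReal)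
              ≤ ∫⁻ u in Set.Ioc 0 s, ‖(s - u) ^ (-α) * g u‖₊ :=
                enorm_integral_le_lintegral_enorm _
            _ = ∫⁻ u in Set.Ioc 0 s, ENNReal.ofReal ((s - u) ^ (-α) * |g u|) := by
                apply setLIntegral_congr_fun measurableSet_Ioc
                intro u hu
                beta_reduce
                rw [← enorm_eq_nnnorm, Real.enorm_eq_ofReal_abs, abs_mul,
                  abs_of_nonneg (Real.rpow_nonneg (by linarith [hu.2]) _)]
        calc (‖((T - s) ^ (α - 1) / Real.Gamma α) * c s‖₊ : ENNReal)
            = ENNReal.ofReal ((T - s) ^ (α - 1) * (Real.Gamma α)⁻¹) * (‖c s‖₊ : ENNReal) := by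
              rw [nnnorm_mul, ENNReal.coe_mul]
              congr 1
              rw [← enorm_eq_nnnorm, Real.enorm_eq_ofReal_abs, div_eq_mul_inv,
                abs_of_nonneg (mul_nonneg (Real.rpow_nonneg (by linarith [hs.2]) _)
                  (by positivity))]
          _ ≤ ENNReal.ofReal ((T - s) ^ (α - 1) * (Real.Gamma α)⁻¹) *
              (ENNReal.ofReal (Real.Gamma (1 - α))⁻¹ *
                ∫⁻ u in Set.Ioc 0 s, ENNReal.ofReal ((s - u) ^ (-α) * |g u|)) :=
              mul_le_mul_right habs _
          _ = _ := by
              rw [ENNReal.ofReal_mul (Real.rpow_nonneg (by linarith [hs.2]) _),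
                ENNReal.ofReal_mul (by positivity)]
              ring
      calc ∫⁻ s in Set.Ioo 0 T, (‖((T - s) ^ (α - 1) / Real.Gamma α) * c s‖₊ : ENNReal)
          ≤ ∫⁻ s in Set.Ioo 0 T,
              ENNReal.ofReal ((Real.Gamma α)⁻¹ * (Real.Gamma (1 - α))⁻¹) *
                (ENNReal.ofReal ((T - s) ^ (α - 1)) *
                  ∫⁻ u in Set.Ioc 0 s, ENNReal.ofReal ((s - u) ^ (-α) * |g u|)) :=
            setLIntegral_mono_ae' measurableSet_Ioo (ae_of_all _ hb)
        _ = ENNReal.ofReal ((Real.Gamma α)⁻¹ * (Real.Gamma (1 - α))⁻¹) *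
            ∫⁻ s in Set.Ioo 0 T, (ENNReal.ofReal ((T - s) ^ (α - 1)) *
              ∫⁻ u in Set.Ioc 0 s, ENNReal.ofReal ((s - u) ^ (-α) * |g u|)) :=
            lintegral_const_mul' _ _ ENNReal.ofReal_ne_top
        _ < ⊤ := ENNReal.mul_lt_top ENNReal.ofReal_lt_top key
  -- the interval integral at T vanishes
  have hfi : IntervalIntegrable (fun s => ((T - s) ^ (α - 1) / Real.Gamma α) * c s)
      volume 0 T := (intervalIntegrable_iff_integrableOn_Ioc_of_le hT.le).mpr hint
  have hposIoc : ∀ᵐ s ∂(volume.restrict (Set.Ioc 0 T)), 0 ≤ c s := by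
    rwa [(Measure.restrict_congr_set Ioo_ae_eq_Ioc).symm]
  have hnn : 0 ≤ᵐ[volume.restrict (Set.Ioc 0 T)]
      fun s => ((T - s) ^ (α - 1) / Real.Gamma α) * c s := by
    filter_upwards [hposIoc, self_mem_ae_restrict measurableSet_Ioc] with s hcs hs
    exact mul_nonneg (div_nonneg (Real.rpow_nonneg (by linarith [hs.2]) _) hΓα.le) hcs
  have hTz : (∫ s in (0:ℝ)..T, ((T - s) ^ (α - 1) / Real.Gamma α) * c s) = 0 := by
    have := hrep T ⟨hT.le, le_refl T⟩
    rw [hwT, hw0, zero_add] at this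
    exact this.symm
  have hfz : (fun s => ((T - s) ^ (α - 1) / Real.Gamma α) * c s)
      =ᵐ[volume.restrict (Set.Ioc 0 T)] 0 :=
    (integral_eq_zero_iff_of_le_of_nonneg_ae hT.le hnn hfi).mp hTz
  -- the Caputo derivative vanishes a.e.
  have hczIoo : ∀ᵐ s ∂(volume.restrict (Set.Ioo 0 T)), c s = 0 := by
    have hfzIoo : (fun s => ((T - s) ^ (α - 1) / Real.Gamma α) * c s)
        =ᵐ[volume.restrict (Set.Ioo 0 T)] 0 := by
      rwa [Measure.restrict_congr_set Ioo_ae_eq_Ioc]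
    filter_upwards [hfzIoo, self_mem_ae_restrict measurableSet_Ioo] with s hfs hs
    have hk : 0 < (T - s) ^ (α - 1) / Real.Gamma α :=
      div_pos (Real.rpow_pos_of_pos (by linarith [hs.2]) _) hΓα
    have := hfs
    simp only [Pi.zero_apply] at this
    exact (mul_eq_zero.mp this).resolve_left (ne_of_gt hk)
  refine ⟨hczIoo, ?_⟩
  -- w vanishes on [0, T]
  intro t ht
  rcases eq_or_lt_of_le ht.1 with h0 | h0
  · rw [← h0]; exact hw0.symm ▸ hw0
  · have hczIoc : ∀ᵐ s ∂(volume.restrict (Set.Ioc 0 T)), c s = 0 := by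
      rwa [(Measure.restrict_congr_set Ioo_ae_eq_Ioc).symm]
    have hczt : ∀ᵐ s ∂(volume.restrict (Set.Ioc 0 t)), c s = 0 :=
      ae_restrict_of_ae_restrict_of_subset (Set.Ioc_subset_Ioc_right ht.2) hczIoc
    rw [hrep t ht, hw0, zero_add, integral_of_le h0.le]
    rw [MeasureTheory.integral_congr_ae (g := fun _ => (0:ℝ))
      (by filter_upwards [hczt] with s hs; rw [hs, mul_zero])]
    simp
end

section
/- For α ∈ (0,1], ε ∈ (0,1), and n ≥ 1 with t_j = jτ, the discrete convolution satisfies τ Σ_{j=1}^{n} t_j^{−1+εα/2} t_{n+1−j}^{−α+εα/2} ≤ c t_n^{−α+εα}, where c depends only on α and ε (not on τ or n). -/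
open Finset Real

lemma sum_rpow_le_aux (p : ℝ) (hp1 : -1 < p) (hp0 : p < 0) (n : ℕ) (hn : 1 ≤ n) :
    ∑ j ∈ Finset.Icc 1 n, (j : ℝ) ^ p ≤ (1 + 1 / (p + 1)) * (n : ℝ) ^ (p + 1) := by
  obtain ⟨m, rfl⟩ : ∃ m, n = m + 1 := ⟨n - 1, by omega⟩
  have hn0 : (0 : ℝ) < (m : ℝ) + 1 := by positivity
  have hp1' : (0 : ℝ) < p + 1 := by linarith
  have hanti : AntitoneOn (fun x : ℝ => x ^ p) (Set.Icc (1 : ℝ) (1 + m)) := by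
    intro x hx y hy hxy
    exact Real.rpow_le_rpow_of_nonpos (lt_of_lt_of_le one_pos hx.1) hxy hp0.le
  have hint := hanti.sum_le_integral
  rw [integral_rpow (Or.inl hp1)] at hint
  have hsum : ∑ j ∈ Finset.Icc 1 (m + 1), (j : ℝ) ^ p
      = 1 + ∑ i ∈ Finset.range m, ((1 : ℝ) + ((i + 1 : ℕ) : ℝ)) ^ p := by
    rw [← Finset.Ico_add_one_right_eq_Icc, Finset.sum_Ico_eq_sum_range]
    simp only [Nat.succ_sub_one, Nat.add_sub_cancel]
    rw [Finset.sum_range_succ']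
    push_cast
    simp [add_comm, Real.one_rpow]
  have hone : (1 : ℝ) ≤ ((m : ℝ) + 1) ^ (p + 1) :=
    Real.one_le_rpow (by linarith [Nat.cast_nonneg (α := ℝ) m]) hp1'.le
  have h1 : ((1 : ℝ) + m) ^ (p + 1) = ((m : ℝ) + 1) ^ (p + 1) := by ring_nf
  rw [h1, Real.one_rpow] at hint
  have hdivle : (((m : ℝ) + 1) ^ (p + 1) - 1) / (p + 1) ≤ ((m : ℝ) + 1) ^ (p + 1) / (p + 1) := by
    gcongr
    linarith
  have hle : ∑ j ∈ Finset.Icc 1 (m + 1), (j : ℝ) ^ p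
      ≤ 1 + ((m : ℝ) + 1) ^ (p + 1) / (p + 1) := by
    rw [hsum]; linarith
  push_cast
  calc ∑ j ∈ Finset.Icc 1 (m + 1), (j : ℝ) ^ p
      ≤ 1 + ((m : ℝ) + 1) ^ (p + 1) / (p + 1) := hle
    _ ≤ ((m : ℝ) + 1) ^ (p + 1) + ((m : ℝ) + 1) ^ (p + 1) / (p + 1) := by linarith
    _ = (1 + 1 / (p + 1)) * ((m : ℝ) + 1) ^ (p + 1) := by ring

lemma key_sum (a b : ℝ) (ha1 : -1 < a) (ha0 : a < 0) (hb1 : -1 < b) (hb0 : b < 0) :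
    ∃ c : ℝ, 0 < c ∧ ∀ n : ℕ, 1 ≤ n →
      ∑ j ∈ Finset.Icc 1 n, (j : ℝ) ^ a * ((n : ℝ) + 1 - j) ^ b ≤ c * (n : ℝ) ^ (a + b + 1) := by
  have ha1' : (0 : ℝ) < a + 1 := by linarith
  have hb1' : (0 : ℝ) < b + 1 := by linarith
  refine ⟨(1 + 1 / (a + 1)) * (2 : ℝ) ^ (-b) + (1 + 1 / (b + 1)) * (2 : ℝ) ^ (-a), by positivity, ?_⟩
  intro n hn
  have hn0 : (0 : ℝ) < n := by exact_mod_cast hn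
  have hpt : ∀ j ∈ Finset.Icc 1 n, (j : ℝ) ^ a * ((n : ℝ) + 1 - j) ^ b
      ≤ ((n : ℝ) / 2) ^ b * (j : ℝ) ^ a + ((n : ℝ) / 2) ^ a * ((n : ℝ) + 1 - j) ^ b := by
    intro j hj
    rw [Finset.mem_Icc] at hj
    have hj0 : (0 : ℝ) < j := by exact_mod_cast hj.1
    have hnj0 : (0 : ℝ) < (n : ℝ) + 1 - j := by
      have : (j : ℝ) ≤ n := by exact_mod_cast hj.2
      linarith
    rcases le_or_gt (2 * (j : ℝ)) ((n : ℝ) + 1) with h | h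
    · have : ((n : ℝ) + 1 - j) ^ b ≤ ((n : ℝ) / 2) ^ b :=
        Real.rpow_le_rpow_of_nonpos (by positivity) (by linarith) hb0.le
      nlinarith [Real.rpow_pos_of_pos hj0 a, Real.rpow_pos_of_pos hnj0 b,
        Real.rpow_pos_of_pos (show (0:ℝ) < (n:ℝ)/2 by positivity) a,
        mul_le_mul_of_nonneg_right this (Real.rpow_pos_of_pos hj0 a).le]
    · have : (j : ℝ) ^ a ≤ ((n : ℝ) / 2) ^ a :=
        Real.rpow_le_rpow_of_nonpos (by positivity) (by linarith) ha0.le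
      nlinarith [Real.rpow_pos_of_pos hj0 a, Real.rpow_pos_of_pos hnj0 b,
        Real.rpow_pos_of_pos (show (0:ℝ) < (n:ℝ)/2 by positivity) b,
        mul_le_mul_of_nonneg_right this (Real.rpow_pos_of_pos hnj0 b).le]
  have hrefl : ∑ j ∈ Finset.Icc 1 n, ((n : ℝ) + 1 - j) ^ b = ∑ j ∈ Finset.Icc 1 n, (j : ℝ) ^ b := by
    rw [← Finset.Ico_add_one_right_eq_Icc, Finset.sum_Ico_eq_sum_range, Finset.sum_Ico_eq_sum_range]
    simp only [Nat.succ_sub_one, Nat.add_sub_cancel]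
    rw [← Finset.sum_range_reflect]
    refine Finset.sum_congr rfl fun i hi => ?_
    rw [Finset.mem_range] at hi
    congr 1
    have h1 : (1 : ℕ) + (n - 1 - i) = n - i := by omega
    rw [h1]
    push_cast [Nat.cast_sub hi.le]
    ring
  have hdiv : ∀ q : ℝ, ((n : ℝ) / 2) ^ q = (n : ℝ) ^ q * (2 : ℝ) ^ (-q) := fun q => by
    rw [Real.div_rpow hn0.le (by norm_num), Real.rpow_neg (by norm_num), div_eq_mul_inv]
  have e1 : (n : ℝ) ^ b * (n : ℝ) ^ (a + 1) = (n : ℝ) ^ (a + b + 1) := by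
    rw [← Real.rpow_add hn0]; ring_nf
  have e2 : (n : ℝ) ^ a * (n : ℝ) ^ (b + 1) = (n : ℝ) ^ (a + b + 1) := by
    rw [← Real.rpow_add hn0]; ring_nf
  have e3 : (n : ℝ) ^ a * (n : ℝ) ^ (b + 1) = (n : ℝ) ^ b * (n : ℝ) ^ (a + 1) := by
    rw [e1, e2]
  calc ∑ j ∈ Finset.Icc 1 n, (j : ℝ) ^ a * ((n : ℝ) + 1 - j) ^ b
      ≤ ∑ j ∈ Finset.Icc 1 n,
          (((n : ℝ) / 2) ^ b * (j : ℝ) ^ a + ((n : ℝ) / 2) ^ a * ((n : ℝ) + 1 - j) ^ b) :=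
        Finset.sum_le_sum hpt
    _ = ((n : ℝ) / 2) ^ b * ∑ j ∈ Finset.Icc 1 n, (j : ℝ) ^ a
        + ((n : ℝ) / 2) ^ a * ∑ j ∈ Finset.Icc 1 n, (j : ℝ) ^ b := by
        rw [Finset.sum_add_distrib, ← Finset.mul_sum, ← Finset.mul_sum, hrefl]
    _ ≤ ((n : ℝ) / 2) ^ b * ((1 + 1 / (a + 1)) * (n : ℝ) ^ (a + 1))
        + ((n : ℝ) / 2) ^ a * ((1 + 1 / (b + 1)) * (n : ℝ) ^ (b + 1)) := by
        refine add_le_add ?_ ?_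
        · exact mul_le_mul_of_nonneg_left (sum_rpow_le_aux a ha1 ha0 n hn)
            (Real.rpow_pos_of_pos (by positivity) b).le
        · exact mul_le_mul_of_nonneg_left (sum_rpow_le_aux b hb1 hb0 n hn)
            (Real.rpow_pos_of_pos (by positivity) a).le
    _ = ((1 + 1 / (a + 1)) * (2 : ℝ) ^ (-b) + (1 + 1 / (b + 1)) * (2 : ℝ) ^ (-a))
        * (n : ℝ) ^ (a + b + 1) := by
        rw [hdiv, hdiv, ← e1]
        linear_combination ((1 + 1 / (b + 1)) * (2 : ℝ) ^ (-a)) * e3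

/-- Discrete convolution estimate on a uniform grid `t_j = jτ`: for `α ∈ (0,1]` and
`ε ∈ (0,1)` there is `c > 0`, depending only on `α` and `ε`, such that for all `τ > 0`
and `n ≥ 1`, `τ ∑_{j=1}^n t_j^{-1+εα/2} t_{n+1-j}^{-α+εα/2} ≤ c t_n^{-α+εα}`. -/
theorem discrete_convolution_estimate (α ε : ℝ) (hα0 : 0 < α) (hα1 : α ≤ 1)
    (hε0 : 0 < ε) (hε1 : ε < 1) :
    ∃ c : ℝ, 0 < c ∧
      ∀ τ : ℝ, 0 < τ → ∀ n : ℕ, 1 ≤ n →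
        τ * ∑ j ∈ Finset.Icc 1 n,
            ((j : ℝ) * τ) ^ (-1 + ε * α / 2) * (((n : ℝ) + 1 - j) * τ) ^ (-α + ε * α / 2)
          ≤ c * ((n : ℝ) * τ) ^ (-α + ε * α) := by
  have hεα : 0 < ε * α := mul_pos hε0 hα0
  have hεα1 : ε * α < 1 := by nlinarith
  set a := -1 + ε * α / 2 with ha
  set b := -α + ε * α / 2 with hb
  obtain ⟨c, hc, hkey⟩ := key_sum a b (by rw [ha]; linarith) (by rw [ha]; linarith)
    (by rw [hb]; nlinarith) (by rw [hb]; nlinarith)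
  refine ⟨c, hc, ?_⟩
  intro τ hτ n hn
  have hn0 : (0 : ℝ) < n := by exact_mod_cast hn
  have hE : -α + ε * α = a + b + 1 := by rw [ha, hb]; ring
  rw [hE]
  have hLHS : ∑ j ∈ Finset.Icc 1 n, ((j : ℝ) * τ) ^ a * (((n : ℝ) + 1 - j) * τ) ^ b
      = (∑ j ∈ Finset.Icc 1 n, (j : ℝ) ^ a * ((n : ℝ) + 1 - j) ^ b) * τ ^ (a + b) := by
    rw [Finset.sum_mul]
    refine Finset.sum_congr rfl fun j hj => ?_
    rw [Finset.mem_Icc] at hj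
    have hnj : (0 : ℝ) ≤ (n : ℝ) + 1 - j := by
      have : (j : ℝ) ≤ n := by exact_mod_cast hj.2
      linarith
    rw [Real.mul_rpow (Nat.cast_nonneg j) hτ.le, Real.mul_rpow hnj hτ.le,
      mul_mul_mul_comm, ← Real.rpow_add hτ]
  rw [hLHS, Real.mul_rpow hn0.le hτ.le, Real.rpow_add_one hτ.ne']
  have hmul := mul_le_mul_of_nonneg_right (hkey n hn)
    (show (0 : ℝ) ≤ τ ^ (a + b) * τ by positivity)
  calc τ * ((∑ j ∈ Finset.Icc 1 n, (j : ℝ) ^ a * ((n : ℝ) + 1 - j) ^ b) * τ ^ (a + b))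
      = (∑ j ∈ Finset.Icc 1 n, (j : ℝ) ^ a * ((n : ℝ) + 1 - j) ^ b) * (τ ^ (a + b) * τ) := by
        ring
    _ ≤ c * (n : ℝ) ^ (a + b + 1) * (τ ^ (a + b) * τ) := hmul
    _ = c * ((n : ℝ) ^ (a + b + 1) * (τ ^ (a + b) * τ)) := by ring
end
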